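/- Let 0 ≤ α < n and fix a globally biLipschitz homeomorphism Ω of ℝⁿ (quasicubes below are taken with respect to Ω). Let 𝔑 assign to each ordered pair of positive locally finite Borel measures on ℝⁿ a value in [0,∞], monotone in each argument: σ′ ≤ σ and ω′ ≤ ω imply 𝔑(σ′,ω′) ≤ 𝔑(σ,ω) (as holds for the two-weight operator norm of a fixed singular integral operator). Suppose there is C₀ > 0 such that √(A₂^α(σ′,ω′)) ≤ C₀ 𝔑(σ′,ω′) for every pair (σ′,ω′) of positive locally finite Borel measures having no common atoms. Then for every pair (σ,ω) of positive locally finite Borel measures on ℝⁿ, the punctured Muckenhoupt conditions hold: A₂^{α,punct}(σ,ω) + A₂^{α,*,punct}(σ,ω) ≤ 8 C₀² 𝔑(σ,ω)². -/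

import Mathlib

open MeasureTheory
open scoped ENNReal NNReal

noncomputable section

/-- An axis-parallel half-open cube in `ℝⁿ`, given by its corner `a` and side length `l`;
its image under a globally biLipschitz map `Ω` is a quasicube. -/
structure QCube (n : ℕ) where
  a : Fin n → ℝ
  l : ℝ

/-- The half-open cube as a subset of `ℝⁿ`. -/
def QCube.pts {n : ℕ} (Q : QCube n) : Set (EuclideanSpace ℝ (Fin n)) :=
  {x | ∀ i, Q.a i ≤ x i ∧ x i < Q.a i + Q.l}

/-- The set of common atoms `𝔓_{(σ,ω)}` of two measures. -/
def commonAtoms {n : ℕ} (σ ω : Measure (EuclideanSpace ℝ (Fin n))) :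
    Set (EuclideanSpace ℝ (Fin n)) :=
  {p | σ {p} ≠ 0 ∧ ω {p} ≠ 0}

/-- The classical Muckenhoupt constant `A₂^α(σ,ω)` over `Ω`-quasicubes. -/
def A2classical (n : ℕ) (α : ℝ) (Om : EuclideanSpace ℝ (Fin n) → EuclideanSpace ℝ (Fin n))
    (σ ω : Measure (EuclideanSpace ℝ (Fin n))) : ℝ≥0∞ :=
  ⨆ (Q : QCube n) (_ : 0 < Q.l),
    σ (Om '' Q.pts) * ω (Om '' Q.pts) / (volume (Om '' Q.pts)) ^ (2 * (1 - α / (n : ℝ)))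

/-- `μ(S, 𝔓_{(σ,ω)})`: the `μ`-measure of `S` with its largest common point mass removed. -/
def punctMass {n : ℕ} (σ ω μ : Measure (EuclideanSpace ℝ (Fin n)))
    (S : Set (EuclideanSpace ℝ (Fin n))) : ℝ≥0∞ :=
  μ S - ⨆ p ∈ S ∩ commonAtoms σ ω, μ {p}

/-- The punctured Muckenhoupt constant `A₂^{α,punct}(σ,ω)` over `Ω`-quasicubes. -/
def A2punct (n : ℕ) (α : ℝ) (Om : EuclideanSpace ℝ (Fin n) → EuclideanSpace ℝ (Fin n))
    (σ ω : Measure (EuclideanSpace ℝ (Fin n))) : ℝ≥0∞ :=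
  ⨆ (Q : QCube n) (_ : 0 < Q.l),
    punctMass σ ω ω (Om '' Q.pts) * σ (Om '' Q.pts)
      / (volume (Om '' Q.pts)) ^ (2 * (1 - α / (n : ℝ)))

/-- The dual punctured Muckenhoupt constant `A₂^{α,*,punct}(σ,ω)` over `Ω`-quasicubes. -/
def A2punctStar (n : ℕ) (α : ℝ) (Om : EuclideanSpace ℝ (Fin n) → EuclideanSpace ℝ (Fin n))
    (σ ω : Measure (EuclideanSpace ℝ (Fin n))) : ℝ≥0∞ :=
  ⨆ (Q : QCube n) (_ : 0 < Q.l),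
    punctMass σ ω σ (Om '' Q.pts) * ω (Om '' Q.pts)
      / (volume (Om '' Q.pts)) ^ (2 * (1 - α / (n : ℝ)))

/-!
Fix a quasicube `G`. The common atoms of `σ` and `ω` form a countable set `P`, and those lying in
`G` can be split into two parts `E`, `O` whose `ω`-masses differ by at most the largest atom `s`:
put the atoms one by one into the currently lighter part. Removing `E` from `σ` and `P \ E` from
`ω` leaves a pair without common atoms, and so does exchanging the roles of `E` and `O`. Since
`ω(G) - s ≤ 2 ω(G \ O)`, `ω(G) - s ≤ 2 ω(G \ E)` and `σ(G) ≤ σ(G \ E) + σ(G \ O)`, one of the two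
pairs carries at least a quarter of `ω(G, 𝔓) σ(G)` on `G`, and the hypothesis together with the
monotonicity of `𝔑` bounds its Muckenhoupt constant by `C₀² 𝔑(σ,ω)²`.
-/

open Set

section BalancedSplit

def greedySums (w : ℕ → ℝ≥0∞) : ℕ → ℝ≥0∞ × ℝ≥0∞
  | 0 => (0, 0)
  | n + 1 =>
    let p := greedySums w n
    if p.1 ≤ p.2 then (p.1 + w n, p.2) else (p.1, p.2 + w n)

def greedyPart (w : ℕ → ℝ≥0∞) : Set ℕ :=
  {n | (greedySums w n).1 ≤ (greedySums w n).2}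

lemma greedySums_eq (w : ℕ → ℝ≥0∞) (n : ℕ) :
    greedySums w n = (∑ i ∈ Finset.range n, (greedyPart w).indicator w i,
      ∑ i ∈ Finset.range n, (greedyPart w)ᶜ.indicator w i) := by
  induction n with
  | zero => rfl
  | succ n ih =>
    by_cases h : n ∈ greedyPart w
    · have h' : (greedySums w n).1 ≤ (greedySums w n).2 := h
      simp only [greedySums, if_pos h']
      rw [Finset.sum_range_succ, Finset.sum_range_succ, indicator_of_mem h,
        indicator_of_notMem (notMem_compl_iff.2 h), add_zero, ih]
    · have h' : ¬(greedySums w n).1 ≤ (greedySums w n).2 := h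
      simp only [greedySums, if_neg h']
      rw [Finset.sum_range_succ, Finset.sum_range_succ, indicator_of_notMem h,
        indicator_of_mem (mem_compl h), add_zero, ih]

lemma greedySums_balanced {w : ℕ → ℝ≥0∞} {s : ℝ≥0∞} (hw : ∀ n, w n ≤ s) (n : ℕ) :
    (greedySums w n).1 ≤ (greedySums w n).2 + s ∧
      (greedySums w n).2 ≤ (greedySums w n).1 + s := by
  induction n with
  | zero => simp [greedySums]
  | succ n ih =>
    obtain ⟨h₁, h₂⟩ := ih
    simp only [greedySums]
    split_ifs with h
    · exact ⟨add_le_add h (hw n), h₂.trans (by gcongr; exact le_self_add)⟩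
    · exact ⟨h₁.trans (by gcongr; exact le_self_add), add_le_add (not_le.1 h).le (hw n)⟩

lemma exists_balanced_indicator_split {w : ℕ → ℝ≥0∞} {s : ℝ≥0∞} (hw : ∀ n, w n ≤ s) :
    ∃ A : Set ℕ, ∑' n, A.indicator w n ≤ ∑' n, Aᶜ.indicator w n + s ∧
      ∑' n, Aᶜ.indicator w n ≤ ∑' n, A.indicator w n + s := by
  have tsum_le {u v : ℕ → ℝ≥0∞}
      (h : ∀ N, ∑ i ∈ Finset.range N, u i ≤ ∑ i ∈ Finset.range N, v i + s) :
      ∑' n, u n ≤ ∑' n, v n + s :=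
    ENNReal.tsum_le_of_sum_range_le fun N => (h N).trans (by gcongr; exact ENNReal.sum_le_tsum _)
  refine ⟨greedyPart w, tsum_le fun N => ?_, tsum_le fun N => ?_⟩
  · simpa [greedySums_eq] using (greedySums_balanced hw N).1
  · simpa [greedySums_eq] using (greedySums_balanced hw N).2

lemma exists_balanced_split {X : Type*} [MeasurableSpace X] [MeasurableSingletonClass X]
    (μ : Measure X) {P : Set X} (hP : P.Countable) {s : ℝ≥0∞} (hs : ∀ p ∈ P, μ {p} ≤ s) :
    ∃ E O, Disjoint E O ∧ E ∪ O = P ∧ μ E ≤ μ O + s ∧ μ O ≤ μ E + s := by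
  obtain ⟨f, hf⟩ := countable_iff_exists_injOn.1 hP
  have hfiber (k : ℕ) : (P ∩ f ⁻¹' {k}).Subsingleton :=
    fun x hx y hy => hf hx.1 hy.1 (hx.2.trans hy.2.symm)
  have hmass (T : Set ℕ) :
      μ (P ∩ f ⁻¹' T) = ∑' k, T.indicator (fun k => μ (P ∩ f ⁻¹' {k})) k := by
    rw [← tsum_subtype, ← measure_biUnion T.to_countable ?_ fun k _ => (hfiber k).measurableSet]
    · congr 1; ext x; simp
    · intro i _ j _ hij
      exact ((disjoint_singleton.2 hij).preimage f).mono inter_subset_right inter_subset_right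
  obtain ⟨A, h₁, h₂⟩ := exists_balanced_indicator_split (s := s)
    (w := fun k => μ (P ∩ f ⁻¹' {k})) fun k => by
      rcases (hfiber k).eq_empty_or_singleton with h | ⟨p, hp⟩
      · simp [h]
      · exact hp ▸ hs p (hp.symm ▸ mem_singleton p : p ∈ P ∩ f ⁻¹' {k}).1
  refine ⟨P ∩ f ⁻¹' A, P ∩ f ⁻¹' Aᶜ, ?_, ?_, by rwa [hmass, hmass], by rwa [hmass, hmass]⟩
  · exact (disjoint_compl_right.preimage f).mono inter_subset_right inter_subset_right
  · rw [← inter_union_distrib_left, ← preimage_union, union_compl_self, preimage_univ, inter_univ]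

end BalancedSplit

lemma measure_tsub_le_two_mul_measure_sdiff {X : Type*} [MeasurableSpace X] (μ : Measure X)
    {G E O : Set X} {s : ℝ≥0∞} (hE : E ⊆ G \ O) (h : μ O ≤ μ E + s) :
    μ G - s ≤ 2 * μ (G \ O) := by
  rw [tsub_le_iff_right]
  calc μ G ≤ μ (G \ O) + μ O := tsub_le_iff_right.1 le_measure_sdiff
    _ ≤ μ (G \ O) + (μ (G \ O) + s) := by gcongr; exact h.trans (by gcongr)
    _ = 2 * μ (G \ O) + s := by ring

section CommonAtoms

variable {n : ℕ}

lemma commonAtoms_comm (σ ω : Measure (EuclideanSpace ℝ (Fin n))) :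
    commonAtoms σ ω = commonAtoms ω σ :=
  ext fun _ => and_comm

lemma countable_commonAtoms (σ ω : Measure (EuclideanSpace ℝ (Fin n))) [SFinite ω] :
    (commonAtoms σ ω).Countable :=
  (Measure.countable_meas_pos_of_disjoint_iUnion (As := fun x => {x})
    (fun _ => measurableSet_singleton _) fun _ _ h => disjoint_singleton.2 h).mono
    fun _ hp => pos_iff_ne_zero.2 hp.2

lemma mem_of_restrict_singleton_ne_zero {X : Type*} [MeasurableSpace X]
    [MeasurableSingletonClass X] {μ : Measure X} {t : Set X} {p : X}
    (h : μ.restrict t {p} ≠ 0) : p ∈ t ∧ μ {p} ≠ 0 := by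
  rw [Measure.restrict_apply (measurableSet_singleton p)] at h
  by_cases hp : p ∈ t
  · exact ⟨hp, by rwa [singleton_inter_of_mem hp] at h⟩
  · simp [singleton_inter_eq_empty.2 hp] at h

lemma commonAtoms_restrict_compl (σ ω : Measure (EuclideanSpace ℝ (Fin n)))
    (F : Set (EuclideanSpace ℝ (Fin n))) :
    commonAtoms (σ.restrict Fᶜ) (ω.restrict (commonAtoms σ ω \ F)ᶜ) = ∅ := by
  refine eq_empty_of_forall_notMem fun p ⟨hσ, hω⟩ => ?_
  obtain ⟨hpF, hσp⟩ := mem_of_restrict_singleton_ne_zero hσ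
  obtain ⟨hpPF, hωp⟩ := mem_of_restrict_singleton_ne_zero hω
  exact hpPF ⟨⟨hσp, hωp⟩, hpF⟩

lemma exists_le_commonAtoms_eq_empty_punctMass_mul_le
    (σ ω : Measure (EuclideanSpace ℝ (Fin n))) (hP : (commonAtoms σ ω).Countable)
    (G : Set (EuclideanSpace ℝ (Fin n))) :
    ∃ σ' ≤ σ, ∃ ω' ≤ ω, commonAtoms σ' ω' = ∅ ∧
      punctMass σ ω ω G * σ G ≤ 4 * (σ' G * ω' G) := by
  set P := commonAtoms σ ω
  set s := ⨆ p ∈ G ∩ P, ω {p}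
  obtain ⟨E, O, hdisj, hEO, hE, hO⟩ :=
    exists_balanced_split ω (hP.mono inter_subset_right) (s := s)
      fun p hp => le_biSup (fun p => ω {p}) hp
  have bound_of_split (F F' : Set (EuclideanSpace ℝ (Fin n))) (hdisj : Disjoint F F')
      (hFF' : F ∪ F' = G ∩ P) (hF' : ω F' ≤ ω F + s) :
      punctMass σ ω ω G * σ (G \ F) ≤
        2 * (σ.restrict Fᶜ G * ω.restrict (P \ F)ᶜ G) := by
    have hFc : F.Countable := hP.mono fun x hx => (hFF' ▸ subset_union_left hx).2
    have hG : G ∩ (P \ F)ᶜ = G \ F' := by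
      ext x
      have hx : x ∈ F ∨ x ∈ F' ↔ x ∈ G ∧ x ∈ P := by rw [← mem_union, hFF', mem_inter_iff]
      have : x ∈ F → x ∉ F' := fun h => disjoint_left.1 hdisj h
      simp only [mem_inter_iff, mem_compl_iff, mem_sdiff]
      tauto
    rw [Measure.restrict_apply' hFc.measurableSet.compl,
      Measure.restrict_apply' ((hP.mono sdiff_subset).measurableSet.compl), hG, ← Set.sdiff_eq]
    calc punctMass σ ω ω G * σ (G \ F) ≤ 2 * ω (G \ F') * σ (G \ F) := by
          gcongr
          refine measure_tsub_le_two_mul_measure_sdiff ω (fun x hx => ⟨?_, ?_⟩) hF'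
          · exact (hFF' ▸ subset_union_left hx).1
          · exact disjoint_left.1 hdisj hx
      _ = 2 * (σ (G \ F) * ω (G \ F')) := by ring
  have hσG : σ G ≤ σ (G \ E) + σ (G \ O) :=
    (measure_mono (by rw [← sdiff_inter, hdisj.inter_eq, sdiff_empty])).trans
      (measure_union_le _ _)
  have hE' := bound_of_split E O hdisj hEO hO
  have hO' := bound_of_split O E hdisj.symm (union_comm O E ▸ hEO) hE
  set a := σ.restrict Eᶜ G * ω.restrict (P \ E)ᶜ G
  set b := σ.restrict Oᶜ G * ω.restrict (P \ O)ᶜ G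
  have hsum : punctMass σ ω ω G * σ G ≤ 2 * a + 2 * b :=
    calc punctMass σ ω ω G * σ G
        ≤ punctMass σ ω ω G * σ (G \ E) + punctMass σ ω ω G * σ (G \ O) := by
          rw [← mul_add]; gcongr
      _ ≤ 2 * a + 2 * b := add_le_add hE' hO'
  rcases le_total a b with hab | hab
  · refine ⟨σ.restrict Oᶜ, Measure.restrict_le_self, ω.restrict (P \ O)ᶜ,
      Measure.restrict_le_self, commonAtoms_restrict_compl σ ω O, hsum.trans ?_⟩
    calc 2 * a + 2 * b ≤ 2 * b + 2 * b := by gcongr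
      _ = 4 * b := by ring
  · refine ⟨σ.restrict Eᶜ, Measure.restrict_le_self, ω.restrict (P \ E)ᶜ,
      Measure.restrict_le_self, commonAtoms_restrict_compl σ ω E, hsum.trans ?_⟩
    calc 2 * a + 2 * b ≤ 2 * a + 2 * a := by gcongr
      _ = 4 * a := by ring

end CommonAtoms

section Muckenhoupt

variable {n : ℕ} (α : ℝ) (Om : EuclideanSpace ℝ (Fin n) → EuclideanSpace ℝ (Fin n))

lemma A2classical_comm (σ ω : Measure (EuclideanSpace ℝ (Fin n))) :
    A2classical n α Om σ ω = A2classical n α Om ω σ := by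
  simp only [A2classical, mul_comm (σ _)]

lemma A2punctStar_eq_A2punct_swap (σ ω : Measure (EuclideanSpace ℝ (Fin n))) :
    A2punctStar n α Om σ ω = A2punct n α Om ω σ := by
  simp only [A2punctStar, A2punct, punctMass, commonAtoms_comm σ ω]

lemma A2punct_le_four_mul (σ ω : Measure (EuclideanSpace ℝ (Fin n))) [SFinite ω] {K : ℝ≥0∞}
    (hK : ∀ σ' ≤ σ, ∀ ω' ≤ ω, commonAtoms σ' ω' = ∅ → A2classical n α Om σ' ω' ≤ K) :
    A2punct n α Om σ ω ≤ 4 * K := by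
  refine iSup₂_le fun Q hQ => ?_
  set G := Om '' Q.pts
  obtain ⟨σ', hσ', ω', hω', hca, hG⟩ :=
    exists_le_commonAtoms_eq_empty_punctMass_mul_le σ ω (countable_commonAtoms σ ω) G
  calc punctMass σ ω ω G * σ G / volume G ^ (2 * (1 - α / n))
      ≤ 4 * (σ' G * ω' G / volume G ^ (2 * (1 - α / n))) := by
        rw [← mul_div_assoc]; exact ENNReal.div_le_div_right hG _
    _ ≤ 4 * A2classical n α Om σ' ω' := by
        gcongr; unfold A2classical; exact le_iSup₂_of_le Q hQ le_rfl
    _ ≤ 4 * K := by gcongr; exact hK σ' hσ' ω' hω' hca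

end Muckenhoupt

theorem statement1 (n : ℕ) (α : ℝ)
    (Om : EuclideanSpace ℝ (Fin n) → EuclideanSpace ℝ (Fin n))
    (Nrm : Measure (EuclideanSpace ℝ (Fin n)) → Measure (EuclideanSpace ℝ (Fin n)) → ℝ≥0∞)
    (hmono : ∀ σ' ω' σ ω, σ' ≤ σ → ω' ≤ ω → Nrm σ' ω' ≤ Nrm σ ω)
    (C₀ : ℝ) (hC₀ : 0 < C₀)
    (hA2 : ∀ σ' ω' : Measure (EuclideanSpace ℝ (Fin n)),
      IsLocallyFiniteMeasure σ' → IsLocallyFiniteMeasure ω' →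
      commonAtoms σ' ω' = ∅ →
      (A2classical n α Om σ' ω') ^ (1 / 2 : ℝ) ≤ ENNReal.ofReal C₀ * Nrm σ' ω') :
    ∀ σ ω : Measure (EuclideanSpace ℝ (Fin n)),
      IsLocallyFiniteMeasure σ → IsLocallyFiniteMeasure ω →
      A2punct n α Om σ ω + A2punctStar n α Om σ ω
        ≤ ENNReal.ofReal (8 * C₀ ^ 2) * (Nrm σ ω) ^ 2 := by
  intro σ ω hσ hω
  set K := (ENNReal.ofReal C₀ * Nrm σ ω) ^ 2
  have hK : ∀ σ' ≤ σ, ∀ ω' ≤ ω, commonAtoms σ' ω' = ∅ → A2classical n α Om σ' ω' ≤ K := by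
    intro σ' hσ' ω' hω' hca
    have h := hA2 σ' ω' (Measure.isLocallyFiniteMeasure_of_le hσ')
      (Measure.isLocallyFiniteMeasure_of_le hω') hca
    rw [one_div, ENNReal.rpow_inv_le_iff two_pos, ENNReal.rpow_two] at h
    exact h.trans (by unfold K; gcongr; exact hmono _ _ _ _ hσ' hω')
  have hK' : ∀ ω' ≤ ω, ∀ σ' ≤ σ, commonAtoms ω' σ' = ∅ → A2classical n α Om ω' σ' ≤ K :=
    fun ω' hω' σ' hσ' hca =>
      A2classical_comm α Om ω' σ' ▸ hK σ' hσ' ω' hω' (commonAtoms_comm ω' σ' ▸ hca)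
  calc A2punct n α Om σ ω + A2punctStar n α Om σ ω ≤ 4 * K + 4 * K := by
        rw [A2punctStar_eq_A2punct_swap]
        exact add_le_add (A2punct_le_four_mul α Om σ ω hK) (A2punct_le_four_mul α Om ω σ hK')
    _ = ENNReal.ofReal (8 * C₀ ^ 2) * Nrm σ ω ^ 2 := by
        rw [ENNReal.ofReal_mul (by norm_num), ENNReal.ofReal_pow hC₀.le]
        norm_num [K]; ring
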